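/- For elements A₁, A₂, A₃ in a Banach algebra and every positive integer n, ‖exp(A₁+A₂+A₃) − ({exp(A₂/n) exp(A₁/n) exp(A₃/n)})^n‖ ≤ (1/(3n²)) · (‖A₁‖+‖A₂‖+‖A₃‖)³ · exp(‖A₁‖+‖A₂‖+‖A₃‖), where {XYZ} = (XYZ + ZYX)/2. -/

import Mathlib

noncomputable def jordanTriple {𝒜 : Type*} [NormedRing 𝒜] [NormedAlgebra ℝ 𝒜]
    (A B C : 𝒜) : 𝒜 := (1/2 : ℝ) • (A * B * C + C * B * A)

/-!
Put `X, Y, Z = A₁/n, A₂/n, A₃/n` and `s = ‖X‖ + ‖Y‖ + ‖Z‖`. In the power series of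
`exp (X + Y + Z)`, `e^Y e^X e^Z` and `e^Z e^X e^Y`, the part of total degree `< 3` of the first is
the average of those of the other two: the degree-two commutators cancel in the symmetrization.
Each remainder is dominated by the tail `e^s - 1 - s - s²/2 ≤ s³ e^s / 6` of the scalar majorant
series, so one step is off by at most `s³ e^s / 3`. Telescoping `S^n - T^n`, where `S` and `T`
multiply with norm at most `e^s`, costs a factor `n e^{(n-1)s}`, which gives the bound.
-/

open NormedSpace Finset
open scoped Nat

noncomputable def expTerm {R : Type*} [Ring R] [Algebra ℝ R] (X : R) (i : ℕ) : R :=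
  (i ! : ℝ)⁻¹ • X ^ i

def cauchyProduct {R : Type*} [Semiring R] (p q : ℕ → R) (k : ℕ) : R :=
  ∑ ij ∈ antidiagonal k, p ij.1 * q ij.2

theorem sum_range_cauchyProduct {R : Type*} [Semiring R] (p q : ℕ → R) (K : ℕ) :
    ∑ k ∈ range K, cauchyProduct p q k = ∑ i ∈ range K, ∑ j ∈ range (K - i), p i * q j := by
  simp only [cauchyProduct, Nat.sum_antidiagonal_eq_sum_range_succ (fun i j => p i * q j)]
  exact sum_range_diag_flip K fun i j => p i * q j

theorem mul_sub_sum_range_cauchyProduct {R : Type*} [Ring R] (a b : R) (p q : ℕ → R) (K : ℕ) :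
    a * b - ∑ k ∈ range K, cauchyProduct p q k =
      (a - ∑ i ∈ range K, p i) * b + ∑ i ∈ range K, p i * (b - ∑ j ∈ range (K - i), q j) := by
  simp only [sum_range_cauchyProduct, sub_mul, mul_sub, sum_mul, mul_sum, sum_sub_distrib]
  abel

theorem sum_range_three_expTerm_add_add {R : Type*} [Ring R] [Algebra ℝ R] (X Y Z : R) :
    ∑ k ∈ range 3, expTerm (X + Y + Z) k =
      (1 / 2 : ℝ) •
        (∑ k ∈ range 3, cauchyProduct (cauchyProduct (expTerm Y) (expTerm X)) (expTerm Z) k +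
          ∑ k ∈ range 3, cauchyProduct (cauchyProduct (expTerm Z) (expTerm X)) (expTerm Y) k) := by
  simp [sum_range_succ, cauchyProduct, Nat.sum_antidiagonal_succ, expTerm, sq, add_mul, mul_add]
  module

theorem Real.hasSum_expTerm (r : ℝ) : HasSum (expTerm r) (Real.exp r) := by
  rw [Real.exp_eq_exp_ℝ]
  exact exp_series_hasSum_exp' (𝕂 := ℝ) r

theorem Real.exp_sub_sum_range_expTerm_le {s : ℝ} (hs : 0 ≤ s) (n : ℕ) :
    Real.exp s - ∑ k ∈ range n, expTerm s k ≤ expTerm s n * Real.exp s := by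
  refine hasSum_le (fun m => ?_) ((hasSum_nat_add_iff' n).mpr (Real.hasSum_expTerm s))
    ((Real.hasSum_expTerm s).mul_left (expTerm s n))
  have hfac : ((n ! * m ! : ℕ) : ℝ) ≤ ((m + n)! : ℕ) := by
    rw [add_comm]
    exact_mod_cast Nat.le_of_dvd (Nat.factorial_pos _)
      (Nat.factorial_mul_factorial_dvd_factorial_add n m)
  simp only [expTerm, smul_eq_mul, pow_add]
  push_cast at hfac
  rw [← div_eq_inv_mul, ← div_eq_inv_mul, ← div_eq_inv_mul, div_mul_div_comm, mul_comm (s ^ m)]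
  gcongr

section NormBounds

variable {𝒜 : Type*} [NormedRing 𝒜]

theorem norm_pow_mul_le (X V : 𝒜) (n : ℕ) : ‖X ^ n * V‖ ≤ ‖X‖ ^ n * ‖V‖ := by
  induction n with
  | zero => simp
  | succ n ih =>
    calc ‖X ^ (n + 1) * V‖ = ‖X * (X ^ n * V)‖ := by rw [pow_succ', mul_assoc]
      _ ≤ ‖X‖ * (‖X‖ ^ n * ‖V‖) := (norm_mul_le _ _).trans (by gcongr)
      _ = ‖X‖ ^ (n + 1) * ‖V‖ := by ring

theorem norm_mul_pow_le (V X : 𝒜) (n : ℕ) : ‖V * X ^ n‖ ≤ ‖V‖ * ‖X‖ ^ n := by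
  induction n with
  | zero => simp
  | succ n ih =>
    calc ‖V * X ^ (n + 1)‖ = ‖V * X ^ n * X‖ := by rw [pow_succ, mul_assoc]
      _ ≤ ‖V‖ * ‖X‖ ^ n * ‖X‖ := (norm_mul_le _ _).trans (by gcongr)
      _ = ‖V‖ * ‖X‖ ^ (n + 1) := by ring

variable [NormedAlgebra ℝ 𝒜]

theorem norm_expTerm_mul_le (X V : 𝒜) (i : ℕ) : ‖expTerm X i * V‖ ≤ expTerm ‖X‖ i * ‖V‖ := by
  rw [expTerm, expTerm, smul_mul_assoc, norm_smul, smul_eq_mul, mul_assoc]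
  simpa using mul_le_mul_of_nonneg_left (norm_pow_mul_le X V i)
    (by positivity : (0 : ℝ) ≤ (i ! : ℝ)⁻¹)

theorem norm_mul_expTerm_le (V X : 𝒜) (i : ℕ) : ‖V * expTerm X i‖ ≤ ‖V‖ * expTerm ‖X‖ i := by
  rw [expTerm, expTerm, mul_smul_comm, norm_smul, smul_eq_mul, mul_left_comm]
  simpa using mul_le_mul_of_nonneg_left (norm_mul_pow_le V X i)
    (by positivity : (0 : ℝ) ≤ (i ! : ℝ)⁻¹)

variable [CompleteSpace 𝒜]

theorem hasSum_expTerm (X : 𝒜) : HasSum (expTerm X) (exp X) :=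
  exp_series_hasSum_exp' (𝕂 := ℝ) X

theorem norm_exp_mul_le (X V : 𝒜) : ‖exp X * V‖ ≤ Real.exp ‖X‖ * ‖V‖ := by
  rw [← ((hasSum_expTerm X).mul_right V).tsum_eq]
  exact tsum_of_norm_bounded ((Real.hasSum_expTerm ‖X‖).mul_right ‖V‖) (norm_expTerm_mul_le X V)

theorem norm_mul_exp_le (V X : 𝒜) : ‖V * exp X‖ ≤ ‖V‖ * Real.exp ‖X‖ := by
  rw [← ((hasSum_expTerm X).mul_left V).tsum_eq]
  exact tsum_of_norm_bounded ((Real.hasSum_expTerm ‖X‖).mul_left ‖V‖) (norm_mul_expTerm_le V X)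

end NormBounds

section Expansion

variable {𝒜 : Type*} [NormedRing 𝒜]

/-- The series `∑ α i = A` majorizes the expansion `a = ∑ p i`. Terms and `a` itself are only
bounded as multipliers, and tails only from order one on, because `‖1‖` may exceed `1`. -/
structure HasMajorizedExpansion (a : 𝒜) (p : ℕ → 𝒜) (A : ℝ) (α : ℕ → ℝ) : Prop where
  nonneg : ∀ i, 0 ≤ α i
  norm_term_mul_le : ∀ i V, ‖p i * V‖ ≤ α i * ‖V‖
  norm_mul_le : ∀ V, ‖V * a‖ ≤ ‖V‖ * A
  norm_sub_sum_le : ∀ k, 0 < k → ‖a - ∑ i ∈ range k, p i‖ ≤ A - ∑ i ∈ range k, α i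

namespace HasMajorizedExpansion

variable {a b : 𝒜} {p q : ℕ → 𝒜} {A B : ℝ} {α β : ℕ → ℝ}

theorem total_nonneg (h : HasMajorizedExpansion a p A α) : 0 ≤ A :=
  (h.nonneg 0).trans <| by simpa using (norm_nonneg _).trans (h.norm_sub_sum_le 1 one_pos)

theorem mul (ha : HasMajorizedExpansion a p A α) (hb : HasMajorizedExpansion b q B β) :
    HasMajorizedExpansion (a * b) (cauchyProduct p q) (A * B) (cauchyProduct α β) where
  nonneg k := sum_nonneg fun ij _ => mul_nonneg (ha.nonneg _) (hb.nonneg _)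
  norm_term_mul_le k V := by
    rw [cauchyProduct, cauchyProduct, sum_mul, sum_mul]
    refine (norm_sum_le _ _).trans (sum_le_sum fun ij _ => ?_)
    calc ‖p ij.1 * q ij.2 * V‖ ≤ α ij.1 * ‖q ij.2 * V‖ := by
          rw [mul_assoc]; exact ha.norm_term_mul_le _ _
      _ ≤ α ij.1 * (β ij.2 * ‖V‖) := by gcongr; exacts [ha.nonneg _, hb.norm_term_mul_le _ _]
      _ = α ij.1 * β ij.2 * ‖V‖ := by ring
  norm_mul_le V :=
    calc ‖V * (a * b)‖ ≤ ‖V * a‖ * B := by rw [← mul_assoc]; exact hb.norm_mul_le _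
      _ ≤ ‖V‖ * A * B := by gcongr; exacts [hb.total_nonneg, ha.norm_mul_le V]
      _ = ‖V‖ * (A * B) := by ring
  norm_sub_sum_le K hK := by
    rw [mul_sub_sum_range_cauchyProduct, mul_sub_sum_range_cauchyProduct]
    refine (norm_add_le _ _).trans
      (add_le_add ?_ ((norm_sum_le _ _).trans (sum_le_sum fun i hi => ?_)))
    · refine (hb.norm_mul_le _).trans ?_
      gcongr
      exacts [hb.total_nonneg, ha.norm_sub_sum_le K hK]
    · refine (ha.norm_term_mul_le _ _).trans ?_
      gcongr
      exacts [ha.nonneg i, hb.norm_sub_sum_le _ (Nat.sub_pos_of_lt (mem_range.mp hi))]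

end HasMajorizedExpansion

variable [NormedAlgebra ℝ 𝒜] [CompleteSpace 𝒜]

theorem hasMajorizedExpansion_exp {X : 𝒜} {r : ℝ} (hr : ‖X‖ ≤ r) :
    HasMajorizedExpansion (exp X) (expTerm X) (Real.exp r) (expTerm r) := by
  have hr₀ : 0 ≤ r := (norm_nonneg X).trans hr
  have hterm (i : ℕ) : expTerm ‖X‖ i ≤ expTerm r i := by
    simp only [expTerm, smul_eq_mul]; gcongr
  refine ⟨fun i => by simp only [expTerm, smul_eq_mul]; positivity, fun i V => ?_, fun V => ?_,
    fun k hk => ?_⟩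
  · exact (norm_expTerm_mul_le X V i).trans (by gcongr; exact hterm i)
  · exact (norm_mul_exp_le V X).trans (by gcongr)
  · rw [← ((hasSum_nat_add_iff' k).mpr (hasSum_expTerm X)).tsum_eq]
    refine tsum_of_norm_bounded ((hasSum_nat_add_iff' k).mpr (Real.hasSum_expTerm r))
      fun i => le_trans ?_ (hterm (i + k))
    simp only [expTerm, norm_smul, smul_eq_mul, norm_inv, Real.norm_natCast]
    gcongr
    exact norm_pow_le' X (by omega)

theorem hasMajorizedExpansion_exp_mul_exp_mul_exp (X Y Z : 𝒜) :
    HasMajorizedExpansion (exp X * exp Y * exp Z)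
      (cauchyProduct (cauchyProduct (expTerm X) (expTerm Y)) (expTerm Z))
      (Real.exp (‖X‖ + ‖Y‖ + ‖Z‖))
      (cauchyProduct (cauchyProduct (expTerm ‖X‖) (expTerm ‖Y‖)) (expTerm ‖Z‖)) := by
  rw [Real.exp_add, Real.exp_add]
  exact ((hasMajorizedExpansion_exp le_rfl).mul (hasMajorizedExpansion_exp le_rfl)).mul
    (hasMajorizedExpansion_exp le_rfl)

end Expansion

theorem norm_pow_succ_sub_pow_succ_le {𝒜 : Type*} [NormedRing 𝒜] {S T : 𝒜} {M δ : ℝ}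
    (hM : 0 ≤ M) (hS : ∀ V, ‖S * V‖ ≤ M * ‖V‖) (hT : ∀ V, ‖V * T‖ ≤ ‖V‖ * M)
    (hδ : ‖S - T‖ ≤ δ) (n : ℕ) : ‖S ^ (n + 1) - T ^ (n + 1)‖ ≤ (n + 1) * M ^ n * δ := by
  have hTpow (V : 𝒜) (k : ℕ) : ‖V * T ^ k‖ ≤ ‖V‖ * M ^ k := by
    induction k with
    | zero => simp
    | succ k ih =>
      rw [pow_succ, ← mul_assoc, pow_succ, ← mul_assoc]
      exact (hT _).trans (by gcongr)
  induction n with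
  | zero => simpa using hδ
  | succ n ih =>
    have hsplit : S ^ (n + 2) - T ^ (n + 2) =
        S * (S ^ (n + 1) - T ^ (n + 1)) + (S - T) * T ^ (n + 1) := by
      rw [pow_succ' S, pow_succ' T]; noncomm_ring
    calc ‖S ^ (n + 1 + 1) - T ^ (n + 1 + 1)‖
        ≤ M * ((n + 1) * M ^ n * δ) + δ * M ^ (n + 1) := by
          rw [hsplit]
          refine (norm_add_le _ _).trans
            (add_le_add ((hS _).trans (by gcongr)) ((hTpow _ _).trans ?_))
          gcongr
      _ = (↑(n + 1) + 1) * M ^ (n + 1) * δ := by push_cast; ring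

section Trotter

variable {𝒜 : Type*} [NormedRing 𝒜] [NormedAlgebra ℝ 𝒜] [CompleteSpace 𝒜]

theorem norm_exp_add_add_sub_jordanTriple_le (X Y Z : 𝒜) :
    ‖exp (X + Y + Z) - jordanTriple (exp Y) (exp X) (exp Z)‖ ≤
      2 * (Real.exp (‖X‖ + ‖Y‖ + ‖Z‖) - ∑ k ∈ range 3, expTerm (‖X‖ + ‖Y‖ + ‖Z‖) k) := by
  have hW := (hasMajorizedExpansion_exp (norm_add₃_le (a := X) (b := Y) (c := Z))).norm_sub_sum_le
    3 (by norm_num)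
  have hYXZ := (hasMajorizedExpansion_exp_mul_exp_mul_exp Y X Z).norm_sub_sum_le 3 (by norm_num)
  have hZXY := (hasMajorizedExpansion_exp_mul_exp_mul_exp Z X Y).norm_sub_sum_le 3 (by norm_num)
  have hsym := sum_range_three_expTerm_add_add ‖X‖ ‖Y‖ ‖Z‖
  rw [smul_eq_mul] at hsym
  rw [show ‖Y‖ + ‖X‖ + ‖Z‖ = ‖X‖ + ‖Y‖ + ‖Z‖ by ring] at hYXZ
  rw [show ‖Z‖ + ‖X‖ + ‖Y‖ = ‖X‖ + ‖Y‖ + ‖Z‖ by ring] at hZXY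
  have hsplit : exp (X + Y + Z) - jordanTriple (exp Y) (exp X) (exp Z) =
      (exp (X + Y + Z) - ∑ k ∈ range 3, expTerm (X + Y + Z) k) - (1 / 2 : ℝ) •
        ((exp Y * exp X * exp Z - ∑ k ∈ range 3,
            cauchyProduct (cauchyProduct (expTerm Y) (expTerm X)) (expTerm Z) k) +
          (exp Z * exp X * exp Y - ∑ k ∈ range 3,
            cauchyProduct (cauchyProduct (expTerm Z) (expTerm X)) (expTerm Y) k)) := by
    rw [sum_range_three_expTerm_add_add, jordanTriple]
    module
  rw [hsplit]
  refine (norm_sub_le _ _).trans ?_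
  rw [norm_smul, Real.norm_of_nonneg (by norm_num)]
  have := norm_add_le_of_le hYXZ hZXY
  linarith

theorem norm_mul_jordanTriple_exp_le (V X Y Z : 𝒜) :
    ‖V * jordanTriple (exp Y) (exp X) (exp Z)‖ ≤ ‖V‖ * Real.exp (‖X‖ + ‖Y‖ + ‖Z‖) := by
  have hYXZ := (hasMajorizedExpansion_exp_mul_exp_mul_exp Y X Z).norm_mul_le V
  have hZXY := (hasMajorizedExpansion_exp_mul_exp_mul_exp Z X Y).norm_mul_le V
  rw [show ‖Y‖ + ‖X‖ + ‖Z‖ = ‖X‖ + ‖Y‖ + ‖Z‖ by ring] at hYXZ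
  rw [show ‖Z‖ + ‖X‖ + ‖Y‖ = ‖X‖ + ‖Y‖ + ‖Z‖ by ring] at hZXY
  rw [jordanTriple, mul_smul_comm, mul_add, norm_smul, Real.norm_of_nonneg (by norm_num)]
  have := norm_add_le_of_le hYXZ hZXY
  linarith

theorem norm_exp_pow_sub_jordanTriple_pow_le (X Y Z : 𝒜) (m : ℕ) :
    ‖exp (X + Y + Z) ^ (m + 1) - jordanTriple (exp Y) (exp X) (exp Z) ^ (m + 1)‖ ≤
      (m + 1) * (‖X‖ + ‖Y‖ + ‖Z‖) ^ 3 / 3 * Real.exp ((m + 1) * (‖X‖ + ‖Y‖ + ‖Z‖)) := by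
  set s := ‖X‖ + ‖Y‖ + ‖Z‖
  have hs : 0 ≤ s := by positivity
  refine (norm_pow_succ_sub_pow_succ_le (Real.exp_pos s).le
    (fun V => (norm_exp_mul_le _ V).trans (by gcongr; exact norm_add₃_le))
    (norm_mul_jordanTriple_exp_le · X Y Z) (norm_exp_add_add_sub_jordanTriple_le X Y Z) m).trans ?_
  have hexp : Real.exp s ^ m * Real.exp s = Real.exp ((m + 1) * s) := by
    rw [← pow_succ, ← Real.exp_nat_mul]; push_cast; rfl
  have hterm : expTerm s 3 = s ^ 3 / 6 := by
    simp [expTerm, Nat.factorial]; ring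
  calc (m + 1) * Real.exp s ^ m * (2 * (Real.exp s - ∑ k ∈ range 3, expTerm s k))
      ≤ (m + 1) * Real.exp s ^ m * (2 * (expTerm s 3 * Real.exp s)) := by
        gcongr; exact Real.exp_sub_sum_range_expTerm_le hs 3
    _ = (m + 1) * s ^ 3 / 3 * Real.exp ((m + 1) * s) := by
        rw [← hexp, hterm]; ring

end Trotter

theorem triple_trotter_error {𝒜 : Type*} [NormedRing 𝒜] [NormedAlgebra ℝ 𝒜]
    [CompleteSpace 𝒜] (A₁ A₂ A₃ : 𝒜) (n : ℕ) (hn : 1 ≤ n) :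
    ‖NormedSpace.exp (A₁ + A₂ + A₃) -
        (jordanTriple (NormedSpace.exp ((n : ℝ)⁻¹ • A₂)) (NormedSpace.exp ((n : ℝ)⁻¹ • A₁))
          (NormedSpace.exp ((n : ℝ)⁻¹ • A₃))) ^ n‖ ≤
      1 / (3 * (n : ℝ) ^ 2) * (‖A₁‖ + ‖A₂‖ + ‖A₃‖) ^ 3 * Real.exp (‖A₁‖ + ‖A₂‖ + ‖A₃‖) := by
  obtain ⟨m, rfl⟩ : ∃ m, n = m + 1 := ⟨n - 1, by omega⟩
  have hm : ((m + 1 : ℕ) : ℝ) ≠ 0 := by positivity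
  set c : ℝ := ((m + 1 : ℕ) : ℝ)⁻¹
  have hnorm : ‖c • A₁‖ + ‖c • A₂‖ + ‖c • A₃‖ = c * (‖A₁‖ + ‖A₂‖ + ‖A₃‖) := by
    simp only [norm_smul, Real.norm_of_nonneg (by positivity : 0 ≤ c)]; ring
  have hexp : exp (A₁ + A₂ + A₃) = exp (c • A₁ + c • A₂ + c • A₃) ^ (m + 1) := by
    let : NormedAlgebra ℚ 𝒜 := NormedAlgebra.restrictScalars ℚ ℝ 𝒜
    rw [← exp_nsmul, ← smul_add, ← smul_add, ← Nat.cast_smul_eq_nsmul ℝ, smul_smul,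
      mul_inv_cancel₀ hm, one_smul]
  rw [hexp]
  refine (norm_exp_pow_sub_jordanTriple_pow_le (c • A₁) (c • A₂) (c • A₃) m).trans_eq ?_
  have hmc : ((m : ℝ) + 1) * c = 1 := by simp only [c]; push_cast at hm ⊢; exact mul_inv_cancel₀ hm
  rw [hnorm, ← mul_assoc, hmc]
  simp only [c]
  push_cast
  field_simp
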